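/- arXiv:1601.01192 — 5 statements merged into one kernel-verified Lean document; each statement's English description precedes it below -/
import Mathlib

section
/- Let n ≥ 1 and let ω ∈ ℝⁿ \ ℚⁿ with sequence of periods T_i(ω). Then for every i ∈ ℕ one has ‖T_i(ω)·ω‖_ℤ ≥ 1/(T_i(ω) + T_{i+1}(ω)). -/
/-!
Let `x = T ω - p` and `y = T' ω - q` be the best lattice approximations for two consecutive
periods `T < T'`. The integer vector `T q - T' p = T' x - T y` has sup norm at most
`T' ‖x‖ + T ‖y‖ < (T + T') ‖Tω‖_ℤ`. If this were `< 1` the vector would vanish, and then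
`T' |x| = T |y| ≤ T' |y|` would contradict `‖T'ω‖_ℤ < ‖Tω‖_ℤ`. Dirichlet's approximation
theorem makes every period well defined, and the periods then increase strictly.
-/

open Finset

/-- Sup norm on `ℝⁿ`. -/
noncomputable def supNorm {n : ℕ} (x : Fin n → ℝ) : ℝ := ⨆ i, |x i|

/-- Sup-norm distance from `x ∈ ℝⁿ` to the lattice `ℤⁿ`. -/
noncomputable def distZ {n : ℕ} (x : Fin n → ℝ) : ℝ :=
  sInf {r : ℝ | ∃ k : Fin n → ℤ, r = supNorm (fun i => x i - k i)}

/-- Distance from a real number to `ℤ`. -/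
noncomputable def distZ1 (t : ℝ) : ℝ := sInf {r : ℝ | ∃ m : ℤ, r = |t - m|}

/-- `ω ∈ ℚⁿ`. -/
def IsRationalVec {n : ℕ} (ω : Fin n → ℝ) : Prop := ∀ i, ∃ q : ℚ, (q : ℝ) = ω i

/-- `ω` is resonant: some nonzero integer vector `k` has `⟨k, ω⟩ ∈ ℤ`. -/
def Resonant {n : ℕ} (ω : Fin n → ℝ) : Prop :=
  ∃ k : Fin n → ℤ, k ≠ 0 ∧ ∃ m : ℤ, ∑ i, (k i : ℝ) * ω i = (m : ℝ)

/-- The sequence of periods of `ω`. -/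
noncomputable def periods {n : ℕ} (ω : Fin n → ℝ) : ℕ → ℕ
  | 0 => 1
  | i + 1 => sInf {T : ℕ | 1 ≤ T ∧
      distZ (fun j => (T : ℝ) * ω j) < distZ (fun j => (periods ω i : ℝ) * ω j)}

/-- The resonance module of `ω`, as a subgroup of `ℤⁿ`. -/
def resModule {n : ℕ} (ω : Fin n → ℝ) : AddSubgroup (Fin n → ℤ) where
  carrier := {k | ∃ m : ℤ, ∑ i, (k i : ℝ) * ω i = (m : ℝ)}
  zero_mem' := ⟨0, by simp⟩
  add_mem' := by
    rintro a b ⟨ma, ha⟩ ⟨mb, hb⟩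
    refine ⟨ma + mb, ?_⟩
    push_cast
    simp only [Pi.add_apply, Int.cast_add, add_mul, Finset.sum_add_distrib, ha, hb]
  neg_mem' := by
    rintro a ⟨m, hm⟩
    refine ⟨-m, ?_⟩
    push_cast
    simp [neg_mul, Finset.sum_neg_distrib, hm]

section Lattice

variable {n : ℕ}

lemma supNorm_eq_norm (x : Fin n → ℝ) : supNorm x = ‖x‖ :=
  le_antisymm
    (Real.iSup_le (fun i => (Real.norm_eq_abs (x i)).symm.trans_le (norm_le_pi_norm x i))
      (norm_nonneg x))
    ((pi_norm_le_iff_of_nonneg (Real.iSup_nonneg fun _ => abs_nonneg _)).2 fun i =>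
      le_ciSup (Set.finite_range fun i => |x i|).bddAbove i)

lemma distZ_le_norm_sub (x : Fin n → ℝ) (k : Fin n → ℤ) :
    distZ x ≤ ‖x - fun i => (k i : ℝ)‖ := by
  have hbdd : BddBelow {r : ℝ | ∃ k : Fin n → ℤ, r = supNorm (fun i => x i - k i)} := by
    refine ⟨0, ?_⟩
    rintro r ⟨k, rfl⟩
    exact (supNorm_eq_norm _).symm ▸ norm_nonneg _
  exact (csInf_le hbdd ⟨k, rfl⟩).trans_eq (supNorm_eq_norm _)

lemma norm_sub_round_le (x : Fin n → ℝ) (k : Fin n → ℤ) :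
    ‖x - fun i => (round (x i) : ℝ)‖ ≤ ‖x - fun i => (k i : ℝ)‖ :=
  (pi_norm_le_iff_of_nonneg (norm_nonneg _)).2 fun i =>
    (round_le (x i) (k i)).trans (norm_le_pi_norm (x - fun i => (k i : ℝ)) i)

lemma distZ_eq_norm_sub_round (x : Fin n → ℝ) :
    distZ x = ‖x - fun i => (round (x i) : ℝ)‖ := by
  refine le_antisymm (distZ_le_norm_sub x _) (le_csInf ⟨_, 0, rfl⟩ ?_)
  rintro r ⟨k, rfl⟩
  exact (norm_sub_round_le x k).trans_eq (supNorm_eq_norm _).symm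

lemma distZ_pos_of_irrational {x : Fin n → ℝ} {j : Fin n} (hj : Irrational (x j)) :
    0 < distZ x := by
  rw [distZ_eq_norm_sub_round]
  refine norm_pos_iff.2 fun h => hj.ne_int (round (x j)) ?_
  simpa [sub_eq_zero] using congrFun h j

lemma intCast_eq_zero_of_norm_lt_one {k : Fin n → ℤ} (h : ‖fun i => (k i : ℝ)‖ < 1) :
    (fun i => (k i : ℝ)) = 0 := by
  funext i
  have hi : |(k i : ℝ)| < 1 := (norm_le_pi_norm (fun i => (k i : ℝ)) i).trans_lt h
  simp [Int.abs_lt_one_iff.1 (by exact_mod_cast hi)]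

end Lattice

section Multiples

variable {n : ℕ} {ω : Fin n → ℝ}

lemma distZ_natCast_mul_pos (hω : ¬ IsRationalVec ω) {T : ℕ} (hT : 0 < T) :
    0 < distZ (fun j => (T : ℝ) * ω j) := by
  obtain ⟨j, hj⟩ : ∃ j, ∀ q : ℚ, (q : ℝ) ≠ ω j := by simpa [IsRationalVec] using hω
  have hirr : Irrational (ω j) := fun ⟨q, hq⟩ => hj q hq
  exact distZ_pos_of_irrational (j := j) (hirr.natCast_mul hT.ne')

/-- Dirichlet's approximation theorem, via compactness of the unit cube in place of pigeonholes. -/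
lemma exists_distZ_natCast_mul_lt (ω : Fin n → ℝ) {d : ℝ} (hd : 0 < d) :
    ∃ T : ℕ, 0 < T ∧ distZ (fun j => (T : ℝ) * ω j) < d := by
  set u : ℕ → Fin n → ℝ := fun k j => Int.fract ((k : ℝ) * ω j)
  have hu : ∀ k, u k ∈ Metric.closedBall 0 1 := fun k => by
    refine mem_closedBall_zero_iff.2 ((pi_norm_le_iff_of_nonneg zero_le_one).2 fun j => ?_)
    rw [Real.norm_eq_abs, abs_of_nonneg (Int.fract_nonneg _)]
    exact (Int.fract_lt_one _).le
  obtain ⟨a, -, φ, hφ, hlim⟩ := tendsto_subseq_of_bounded Metric.isBounded_closedBall hu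
  obtain ⟨N, hN⟩ := Metric.cauchySeq_iff'.1 hlim.cauchySeq d hd
  have hlt : φ N < φ (N + 1) := hφ N.lt_succ_self
  refine ⟨φ (N + 1) - φ N, Nat.sub_pos_of_lt hlt, ?_⟩
  calc distZ (fun j => ((φ (N + 1) - φ N : ℕ) : ℝ) * ω j)
      ≤ ‖(fun j => ((φ (N + 1) - φ N : ℕ) : ℝ) * ω j) -
          fun j => ((⌊(φ (N + 1) : ℝ) * ω j⌋ - ⌊(φ N : ℝ) * ω j⌋ : ℤ) : ℝ)‖ :=
        distZ_le_norm_sub _ _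
    _ = dist (u (φ (N + 1))) (u (φ N)) := by
        rw [dist_eq_norm]
        congr 1
        funext j
        simp only [u, Pi.sub_apply, Int.fract, Nat.cast_sub hlt.le, Int.cast_sub]
        ring
    _ < d := hN _ N.le_succ

lemma one_div_add_le_distZ_of_distZ_lt {T T' : ℕ} (hT : 0 < T) (hTT' : T ≤ T')
    (hlt : distZ (fun j => (T' : ℝ) * ω j) < distZ (fun j => (T : ℝ) * ω j)) :
    1 / ((T : ℝ) + T') ≤ distZ (fun j => (T : ℝ) * ω j) := by
  set x : Fin n → ℝ := fun j => (T : ℝ) * ω j - round ((T : ℝ) * ω j)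
  set y : Fin n → ℝ := fun j => (T' : ℝ) * ω j - round ((T' : ℝ) * ω j)
  rw [distZ_eq_norm_sub_round, distZ_eq_norm_sub_round] at hlt
  rw [distZ_eq_norm_sub_round]
  change ‖y‖ < ‖x‖ at hlt
  change _ ≤ ‖x‖
  have hT0 : (0 : ℝ) < T := Nat.cast_pos.2 hT
  have hTT'R : (T : ℝ) ≤ T' := Nat.cast_le.2 hTT'
  by_contra! hsmall
  rw [lt_div_iff₀' (by positivity)] at hsmall
  have hcomb : (fun j => ((T * round ((T' : ℝ) * ω j) - T' * round ((T : ℝ) * ω j) : ℤ) : ℝ))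
      = (T' : ℝ) • x - (T : ℝ) • y := by
    funext j
    simp only [x, y, Pi.sub_apply, Pi.smul_apply, smul_eq_mul, Int.cast_sub, Int.cast_mul,
      Int.cast_natCast]
    ring
  have hnorm : ‖(T' : ℝ) • x - (T : ℝ) • y‖ < 1 :=
    calc ‖(T' : ℝ) • x - (T : ℝ) • y‖ ≤ T' * ‖x‖ + T * ‖y‖ := by
          refine (norm_sub_le _ _).trans_eq ?_
          rw [norm_smul, norm_smul, Real.norm_natCast, Real.norm_natCast]
      _ ≤ (T + T') * ‖x‖ := by nlinarith
      _ < 1 := hsmall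
  have hvanish : (T' : ℝ) • x = (T : ℝ) • y :=
    sub_eq_zero.1 (hcomb ▸ intCast_eq_zero_of_norm_lt_one (hcomb ▸ hnorm))
  have hnorms : (T' : ℝ) * ‖x‖ = T * ‖y‖ := by
    simpa only [norm_smul, Real.norm_natCast] using congrArg norm hvanish
  nlinarith [norm_nonneg y]

end Multiples

section Periods

variable {n : ℕ} {ω : Fin n → ℝ}

lemma periods_succ_mem (hω : ¬ IsRationalVec ω) {m : ℕ} (hm : 1 ≤ periods ω m) :
    1 ≤ periods ω (m + 1) ∧
      distZ (fun j => (periods ω (m + 1) : ℝ) * ω j) < distZ (fun j => (periods ω m : ℝ) * ω j) :=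
  Nat.sInf_mem (exists_distZ_natCast_mul_lt ω (distZ_natCast_mul_pos hω hm))

lemma one_le_periods (hω : ¬ IsRationalVec ω) (m : ℕ) : 1 ≤ periods ω m := by
  induction m with
  | zero => exact le_rfl
  | succ m ih => exact (periods_succ_mem hω ih).1

lemma distZ_periods_succ_lt (hω : ¬ IsRationalVec ω) (m : ℕ) :
    distZ (fun j => (periods ω (m + 1) : ℝ) * ω j) < distZ (fun j => (periods ω m : ℝ) * ω j) :=
  (periods_succ_mem hω (one_le_periods hω m)).2

lemma periods_succ_le (m : ℕ) {T : ℕ} (hT : 1 ≤ T)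
    (h : distZ (fun j => (T : ℝ) * ω j) < distZ (fun j => (periods ω m : ℝ) * ω j)) :
    periods ω (m + 1) ≤ T :=
  Nat.sInf_le ⟨hT, h⟩

lemma periods_lt_periods_succ (hω : ¬ IsRationalVec ω) (m : ℕ) :
    periods ω m < periods ω (m + 1) := by
  refine lt_of_le_of_ne ?_ fun h => (distZ_periods_succ_lt hω m).ne' (by rw [h])
  cases m with
  | zero => exact one_le_periods hω 1
  | succ m =>
    exact periods_succ_le m (one_le_periods hω _)
      ((distZ_periods_succ_lt hω (m + 1)).trans (distZ_periods_succ_lt hω m))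

end Periods

theorem stmt2_general {n : ℕ} (ω : Fin n → ℝ) (hω : ¬ IsRationalVec ω) (i : ℕ) :
    distZ (fun j => (periods ω i : ℝ) * ω j) ≥
      1 / ((periods ω i : ℝ) + (periods ω (i + 1) : ℝ)) :=
  one_div_add_le_distZ_of_distZ_lt (one_le_periods hω i) (periods_lt_periods_succ hω i).le
    (distZ_periods_succ_lt hω i)

/-- `‖T_i(ω)·ω‖_ℤ ≥ 1/(T_i(ω) + T_{i+1}(ω))`. -/
theorem stmt2 {n : ℕ} (hn : 1 ≤ n) (ω : Fin n → ℝ) (hω : ¬ IsRationalVec ω) (i : ℕ) :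
    distZ (fun j => (periods ω i : ℝ) * ω j) ≥
      1 / ((periods ω i : ℝ) + (periods ω (i + 1) : ℝ)) :=
  stmt2_general ω hω i
end

section
/- Let n ≥ 1 and τ ≥ 0, and set σ = τ/((n−1)τ + n). Then Ω_n(σ) ⊆ Ω̃(σ), i.e. every ω ∈ ℝⁿ satisfying ‖Tω‖_ℤ ≥ C·T^{-(1+σ)/n} for all positive integers T (for some C > 0) is nonresonant and its periods satisfy T_{i+1}(ω) ≤ C'·T_i(ω)^{1+σ} for all i ∈ ℕ, for some constant C' > 0. -/
open Finset

/-!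
Put `E = (1 + σ) / n`, so that `‖Tω‖ ≥ C T^(-E)`.

Periods: simultaneous Dirichlet approximation with `Q ≈ 1 / ‖T_i ω‖` yields some `T ≤ Q^n` with
`‖Tω‖ < ‖T_i ω‖`, hence `T_{i+1} ≤ (2 / ‖T_i ω‖)^n ≤ (2 / C)^n T_i^(nE) = (2 / C)^n T_i^(1 + σ)`.

Nonresonance: if `⟨k, ω⟩ ∈ ℤ` with `k_{i₀} ≠ 0`, Dirichlet approximation of the other `n - 1`
coordinates, multiplied by `|k_{i₀}|`, gives `T ≤ K Q^(n-1)` with `‖Tω‖ ≤ K / Q`, where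
`K = ∑ |k_i|`. The lower bound then forces `C Q^(1 - (n-1)E) ≤ K^(1+E)` for every `Q`, which is
impossible because `(n - 1)E < 1` is equivalent to `(n - 1)σ < 1`. Rational vectors are resonant.
-/

lemma distZ_le_of_abs_sub_le {n : ℕ} {x : Fin n → ℝ} {c : ℝ} (hc : 0 ≤ c) (k : Fin n → ℤ)
    (h : ∀ i, |x i - k i| ≤ c) : distZ x ≤ c := by
  have hbdd : BddBelow {r : ℝ | ∃ k : Fin n → ℤ, r = supNorm (fun i => x i - k i)} :=
    ⟨0, by rintro r ⟨k, rfl⟩; exact Real.iSup_nonneg fun i => abs_nonneg _⟩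
  exact (csInf_le hbdd ⟨k, rfl⟩).trans (Real.iSup_le h hc)

lemma distZ_le_one {n : ℕ} (x : Fin n → ℝ) : distZ x ≤ 1 :=
  distZ_le_of_abs_sub_le zero_le_one (fun i => ⌊x i⌋) fun i => by
    rw [← Int.fract, abs_of_nonneg (Int.fract_nonneg _)]
    exact (Int.fract_lt_one _).le

theorem exists_nat_abs_mul_sub_int_lt {ι : Type*} (x : ι → ℝ) (S : Finset ι) {Q : ℕ}
    (hQ : 0 < Q) :
    ∃ T : ℕ, 0 < T ∧ T ≤ Q ^ #S ∧ ∃ c : ι → ℤ, ∀ j ∈ S, |T * x j - c j| < (Q : ℝ)⁻¹ := by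
  classical
  have hQ' : (0 : ℝ) < Q := by exact_mod_cast hQ
  let f : ℕ → S → ℤ := fun t j => ⌊Int.fract (t * x j) * Q⌋
  have hcard : #(Fintype.piFinset fun _ : S => Ico (0 : ℤ) Q) < #(range (Q ^ #S + 1)) := by
    simp
  have hmaps : ∀ t ∈ range (Q ^ #S + 1), f t ∈ Fintype.piFinset fun _ : S => Ico (0 : ℤ) Q := by
    intro t _
    simp only [Fintype.mem_piFinset, mem_Ico, f, Int.floor_nonneg, Int.floor_lt]
    exact fun j => ⟨by positivity, by exact_mod_cast mul_lt_of_lt_one_left hQ' (Int.fract_lt_one _)⟩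
  obtain ⟨t₁, ht₁, t₂, ht₂, hne, hf⟩ := exists_ne_map_eq_of_card_lt_of_maps_to hcard hmaps
  wlog hlt : t₁ < t₂ generalizing t₁ t₂
  · exact this t₂ ht₂ t₁ ht₁ hne.symm hf.symm (hne.lt_or_gt.resolve_left hlt)
  refine ⟨t₂ - t₁, Nat.sub_pos_of_lt hlt, ?_, fun j => ⌊t₂ * x j⌋ - ⌊t₁ * x j⌋, fun j hj => ?_⟩
  · have := mem_range.mp ht₂
    omega
  have hfj := congrFun hf ⟨j, hj⟩
  have hfract : |Int.fract (t₂ * x j) * Q - Int.fract (t₁ * x j) * Q| < 1 :=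
    Int.abs_sub_lt_one_of_floor_eq_floor hfj.symm
  rw [← sub_mul, abs_mul, abs_of_pos hQ', ← lt_div_iff₀ hQ', one_div] at hfract
  have hdiff : ((t₂ - t₁ : ℕ) : ℝ) * x j - ((⌊t₂ * x j⌋ - ⌊t₁ * x j⌋ : ℤ) : ℝ) =
      Int.fract (t₂ * x j) - Int.fract (t₁ * x j) := by
    simp only [Int.fract]
    push_cast [Nat.cast_sub hlt.le]
    ring
  rwa [hdiff]

lemma exists_distZ_le_inv {n : ℕ} (ω : Fin n → ℝ) {Q : ℕ} (hQ : 0 < Q) :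
    ∃ T : ℕ, 0 < T ∧ T ≤ Q ^ n ∧ distZ (fun j => (T : ℝ) * ω j) ≤ (Q : ℝ)⁻¹ := by
  obtain ⟨T, hT, hTQ, c, hc⟩ := exists_nat_abs_mul_sub_int_lt ω univ hQ
  refine ⟨T, hT, by simpa using hTQ, distZ_le_of_abs_sub_le (by positivity) c fun j => ?_⟩
  exact (hc j (mem_univ j)).le

open Filter in
lemma not_forall_mul_rpow_neg_le_mul_inv {C K E : ℝ} {p : ℕ} (hC : 0 < C) (hK : 0 < K)
    (hpE : p * E < 1) : ¬ ∀ Q : ℕ, 0 < Q → C * (K * (Q : ℝ) ^ p) ^ (-E) ≤ K * (Q : ℝ)⁻¹ := by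
  intro h
  obtain ⟨Q, hQ, hbig⟩ : ∃ Q : ℕ, 0 < Q ∧ K ^ (1 + E) / C < (Q : ℝ) ^ (1 - p * E) :=
    ((((tendsto_rpow_atTop (by linarith)).comp tendsto_natCast_atTop_atTop).eventually_gt_atTop
      _).and (eventually_gt_atTop 0)).exists.imp fun Q hQ => ⟨hQ.2, hQ.1⟩
  have hQ' : (0 : ℝ) < Q := by exact_mod_cast hQ
  have hsplit : (K * (Q : ℝ) ^ p) ^ (-E) = (K ^ E * (Q : ℝ) ^ (p * E))⁻¹ := by
    rw [Real.rpow_neg (by positivity), Real.mul_rpow hK.le (by positivity), ← Real.rpow_natCast,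
      ← Real.rpow_mul hQ'.le]
  have hQpow : (Q : ℝ) ^ (1 - p * E) = Q / (Q : ℝ) ^ (p * E) := by
    rw [Real.rpow_sub hQ', Real.rpow_one]
  have hKpow : K ^ (1 + E) = K * K ^ E := by rw [Real.rpow_add hK, Real.rpow_one]
  -- `h Q` says `C Q^(1 - pE) ≤ K^(1+E)`.
  have hle := h Q hQ
  rw [hsplit, ← div_eq_mul_inv, div_le_iff₀ (by positivity)] at hle
  rw [hQpow, hKpow, div_lt_iff₀ hC, div_mul_eq_mul_div, lt_div_iff₀ (by positivity)] at hbig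
  have hCQ : C * Q ≤ K * K ^ E * (Q : ℝ) ^ (p * E) := by
    calc C * Q ≤ K * (Q : ℝ)⁻¹ * (K ^ E * (Q : ℝ) ^ (p * E)) * Q := by gcongr
      _ = K * K ^ E * (Q : ℝ) ^ (p * E) := by field_simp
  linarith

lemma distZ_natAbs_mul_le_of_sum_mul_eq_int {n : ℕ} {y : Fin n → ℝ} {k : Fin n → ℤ} {m : ℤ}
    (hm : ∑ i, (k i : ℝ) * y i = m) (i₀ : Fin n) (c : Fin n → ℤ) {δ : ℝ} (hδ : 0 ≤ δ)
    (hc : ∀ j ≠ i₀, |y j - c j| ≤ δ) :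
    distZ (fun j => ((k i₀).natAbs : ℝ) * y j) ≤ (∑ i, |(k i : ℝ)|) * δ := by
  set s := (k i₀).sign
  have ha : ((k i₀).natAbs : ℝ) = s * k i₀ := by
    rw [Nat.cast_natAbs]
    exact_mod_cast (Int.sign_mul_self_eq_natAbs _).symm
  have hs : |(s : ℝ)| ≤ 1 := by
    rcases Int.sign_trichotomy (k i₀) with h | h | h <;> simp [s, h]
  have hK₀ : |(k i₀ : ℝ)| ≤ ∑ i, |(k i : ℝ)| :=
    single_le_sum (f := fun i => |(k i : ℝ)|) (fun i _ => abs_nonneg _) (mem_univ i₀)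
  have hK : ∑ j ∈ univ.erase i₀, |(k j : ℝ)| ≤ ∑ i, |(k i : ℝ)| :=
    sum_le_sum_of_subset_of_nonneg (erase_subset _ _) fun _ _ _ => abs_nonneg _
  refine distZ_le_of_abs_sub_le (by positivity)
    (fun j => if j = i₀ then s * (m - ∑ j ∈ univ.erase i₀, k j * c j) else (k i₀).natAbs * c j)
    fun j => ?_
  by_cases hj : j = i₀
  -- `|k i₀| y i₀ = sign (k i₀) (m - ∑_{j ≠ i₀} k j y j)`, and each `y j` is close to `c j`.
  · subst hj
    have hsplit := add_sum_erase univ (fun i => (k i : ℝ) * y i) (mem_univ j)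
    have hres : ((k j).natAbs : ℝ) * y j - ((s * (m - ∑ j' ∈ univ.erase j, k j' * c j') : ℤ) : ℝ)
        = -s * ∑ j' ∈ univ.erase j, (k j' : ℝ) * (y j' - c j') := by
      simp only [mul_sub, sum_sub_distrib]
      push_cast
      rw [ha, ← hm, ← hsplit]
      ring
    rw [if_pos rfl, hres, abs_mul, abs_neg]
    calc |(s : ℝ)| * |∑ j' ∈ univ.erase j, (k j' : ℝ) * (y j' - c j')|
        ≤ 1 * ∑ j' ∈ univ.erase j, |(k j' : ℝ)| * δ := by
          refine mul_le_mul hs ((abs_sum_le_sum_abs _ _).trans (sum_le_sum fun j' hj' => ?_))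
            (abs_nonneg _) zero_le_one
          rw [abs_mul]
          exact mul_le_mul_of_nonneg_left (hc j' (ne_of_mem_erase hj')) (abs_nonneg _)
      _ ≤ (∑ i, |(k i : ℝ)|) * δ := by
          rw [one_mul, ← sum_mul]
          exact mul_le_mul_of_nonneg_right hK hδ
  · rw [if_neg hj, Int.cast_mul, Int.cast_natCast, ← mul_sub, abs_mul, Nat.abs_cast,
      Nat.cast_natAbs, Int.cast_abs]
    exact mul_le_mul hK₀ (hc j hj) (abs_nonneg _) (hK₀.trans' (abs_nonneg _))

lemma Resonant.exists_distZ_le {n : ℕ} {ω : Fin n → ℝ} (h : Resonant ω) :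
    ∃ K : ℝ, 0 < K ∧ ∀ Q : ℕ, 0 < Q → ∃ T : ℕ, 0 < T ∧ (T : ℝ) ≤ K * (Q : ℝ) ^ (n - 1) ∧
      distZ (fun j => (T : ℝ) * ω j) ≤ K * (Q : ℝ)⁻¹ := by
  obtain ⟨k, hk, m, hm⟩ := h
  obtain ⟨i₀, hi₀⟩ := Function.ne_iff.mp hk
  have hK₀ : |(k i₀ : ℝ)| ≤ ∑ i, |(k i : ℝ)| :=
    single_le_sum (f := fun i => |(k i : ℝ)|) (fun i _ => abs_nonneg _) (mem_univ i₀)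
  have hpos : 0 < |(k i₀ : ℝ)| := by simpa using hi₀
  refine ⟨∑ i, |(k i : ℝ)|, hpos.trans_le hK₀, fun Q hQ => ?_⟩
  obtain ⟨T, hT, hTQ, c, hc⟩ := exists_nat_abs_mul_sub_int_lt ω (univ.erase i₀) hQ
  rw [card_erase_of_mem (mem_univ _), card_univ, Fintype.card_fin] at hTQ
  have hmT : ∑ i, (k i : ℝ) * (T * ω i) = ((T * m : ℤ) : ℝ) := by
    push_cast
    rw [← hm, mul_sum]
    exact sum_congr rfl fun i _ => by ring
  have hdist := distZ_natAbs_mul_le_of_sum_mul_eq_int hmT i₀ c (by positivity)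
    fun j hj => (hc j (mem_erase.mpr ⟨hj, mem_univ j⟩)).le
  refine ⟨(k i₀).natAbs * T, Nat.mul_pos (Int.natAbs_pos.mpr hi₀) hT, ?_, ?_⟩
  · rw [Nat.cast_mul, Nat.cast_natAbs, Int.cast_abs]
    exact mul_le_mul hK₀ (by exact_mod_cast hTQ) (Nat.cast_nonneg _) (hpos.le.trans hK₀)
  · simpa only [Nat.cast_mul, mul_assoc] using hdist

/-- Membership of `ω` in the set `Ω_n(σ)`. -/
def IsDiophantine {n : ℕ} (σ : ℝ) (ω : Fin n → ℝ) : Prop :=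
  ∃ C > (0 : ℝ), ∀ T : ℕ, 1 ≤ T →
    distZ (fun j => (T : ℝ) * ω j) ≥ C * (T : ℝ) ^ (-(1 + σ) / (n : ℝ))

theorem IsDiophantine.not_resonant {n : ℕ} {σ : ℝ} {ω : Fin n → ℝ} (h : IsDiophantine σ ω)
    (hσ : -1 ≤ σ) (hσ₁ : ((n : ℝ) - 1) * σ < 1) : ¬ Resonant ω := by
  intro hres
  have hn : 0 < n := by
    obtain ⟨k, hk, -⟩ := hres
    exact Nat.pos_of_ne_zero fun h0 => by subst h0; exact hk (Subsingleton.elim _ _)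
  obtain ⟨C, hC, hCω⟩ := h
  obtain ⟨K, hK, happrox⟩ := hres.exists_distZ_le
  have hE : 0 ≤ (1 + σ) / n := div_nonneg (by linarith) (Nat.cast_nonneg n)
  have hpE : ((n - 1 : ℕ) : ℝ) * ((1 + σ) / n) < 1 := by
    rw [Nat.cast_pred hn, ← mul_div_assoc, div_lt_one (by exact_mod_cast hn)]
    linarith
  refine not_forall_mul_rpow_neg_le_mul_inv hC hK hpE fun Q hQ => ?_
  obtain ⟨T, hT, hTQ, hdist⟩ := happrox Q hQ
  calc C * (K * (Q : ℝ) ^ (n - 1)) ^ (-((1 + σ) / n))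
      ≤ C * (T : ℝ) ^ (-((1 + σ) / n)) :=
        mul_le_mul_of_nonneg_left
          (Real.rpow_le_rpow_of_nonpos (by exact_mod_cast hT) hTQ (neg_nonpos.mpr hE)) hC.le
    _ ≤ distZ (fun j => (T : ℝ) * ω j) := by simpa only [neg_div] using hCω T hT
    _ ≤ K * (Q : ℝ)⁻¹ := hdist

lemma IsRationalVec.resonant {n : ℕ} {ω : Fin n → ℝ} (hn : 0 < n) (h : IsRationalVec ω) :
    Resonant ω := by
  obtain ⟨q, hq⟩ := h ⟨0, hn⟩
  refine ⟨Pi.single ⟨0, hn⟩ (q.den : ℤ), by simp, q.num, ?_⟩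
  simp [Pi.single_apply, ← hq]
  exact_mod_cast q.den_mul_eq_num

lemma periods_succ_pos_and_le_of_distZ_lt {n : ℕ} {ω : Fin n → ℝ} {i T : ℕ} (hT : 0 < T)
    (h : distZ (fun j => (T : ℝ) * ω j) < distZ (fun j => (periods ω i : ℝ) * ω j)) :
    0 < periods ω (i + 1) ∧ periods ω (i + 1) ≤ T := by
  have hmem : T ∈ {T : ℕ | 1 ≤ T ∧
      distZ (fun j => (T : ℝ) * ω j) < distZ (fun j => (periods ω i : ℝ) * ω j)} := ⟨hT, h⟩
  rw [periods]
  exact ⟨(Nat.sInf_mem ⟨T, hmem⟩).1, Nat.sInf_le hmem⟩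

lemma periods_succ_pos_and_le_of_distZ_pos {n : ℕ} {ω : Fin n → ℝ} {i : ℕ}
    (hε : 0 < distZ (fun j => (periods ω i : ℝ) * ω j)) :
    0 < periods ω (i + 1) ∧
      (periods ω (i + 1) : ℝ) ≤ (2 / distZ (fun j => (periods ω i : ℝ) * ω j)) ^ n := by
  set ε := distZ (fun j => (periods ω i : ℝ) * ω j)
  set Q := ⌊ε⁻¹⌋₊ + 1
  have hQ' : (0 : ℝ) < Q := by positivity
  have hQε : (Q : ℝ)⁻¹ < ε := by
    rw [inv_lt_comm₀ hQ' hε]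
    exact_mod_cast Nat.lt_floor_add_one _
  have hQle : (Q : ℝ) ≤ 2 / ε := by
    have h1 : 1 ≤ ε⁻¹ := (one_le_inv₀ hε).mpr (distZ_le_one _)
    have h2 := Nat.floor_le (inv_nonneg.mpr hε.le)
    calc (Q : ℝ) ≤ ε⁻¹ + 1 := by push_cast [Q]; linarith
      _ ≤ 2 / ε := by rw [div_eq_mul_inv]; linarith
  obtain ⟨T, hT, hTQ, hdist⟩ := exists_distZ_le_inv ω (Nat.succ_pos _ : 0 < Q)
  obtain ⟨hpos, hle⟩ := periods_succ_pos_and_le_of_distZ_lt hT (hdist.trans_lt hQε)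
  refine ⟨hpos, ?_⟩
  calc (periods ω (i + 1) : ℝ) ≤ (Q : ℝ) ^ n := by exact_mod_cast hle.trans hTQ
    _ ≤ (2 / ε) ^ n := by gcongr

theorem IsDiophantine.exists_periods_succ_le {n : ℕ} {σ : ℝ} {ω : Fin n → ℝ} (hn : 0 < n)
    (h : IsDiophantine σ ω) :
    ∃ C' > (0 : ℝ), ∀ i, (periods ω (i + 1) : ℝ) ≤ C' * (periods ω i : ℝ) ^ (1 + σ) := by
  obtain ⟨C, hC, hCω⟩ := h
  have hstep : ∀ i, 0 < periods ω i → 0 < periods ω (i + 1) ∧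
      (periods ω (i + 1) : ℝ) ≤ (2 / C) ^ n * (periods ω i : ℝ) ^ (1 + σ) := by
    intro i hi
    have hT : (0 : ℝ) < periods ω i := by exact_mod_cast hi
    have hlower := hCω _ hi
    have hε := hlower.trans_lt' (by positivity)
    obtain ⟨hpos, hle⟩ := periods_succ_pos_and_le_of_distZ_pos hε
    refine ⟨hpos, hle.trans ?_⟩
    calc (2 / distZ (fun j => (periods ω i : ℝ) * ω j)) ^ n
        ≤ (2 / (C * (periods ω i : ℝ) ^ (-(1 + σ) / n))) ^ n :=
          pow_le_pow_left₀ (div_pos two_pos hε).le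
            (div_le_div_of_nonneg_left zero_le_two (by positivity) hlower) n
      _ = (2 / C) ^ n * (periods ω i : ℝ) ^ (1 + σ) := by
        rw [neg_div, Real.rpow_neg hT.le, div_mul_eq_div_div, div_inv_eq_mul, mul_pow,
          ← Real.rpow_natCast ((periods ω i : ℝ) ^ ((1 + σ) / n)) n, ← Real.rpow_mul hT.le,
          div_mul_cancel₀ _ (by positivity)]
  have hall : ∀ i, 0 < periods ω i := by
    intro i
    induction i with
    | zero => rw [periods]; exact one_pos
    | succ i ih => exact (hstep i ih).1
  exact ⟨(2 / C) ^ n, by positivity, fun i => (hstep i (hall i)).2⟩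

/-- with `σ = τ/((n-1)τ+n)`, `Ω_n(σ) ⊆ Ω̃(σ)`. -/
theorem stmt3 {n : ℕ} (hn : 1 ≤ n) (τ : ℝ) (hτ : 0 ≤ τ) (ω : Fin n → ℝ)
    (hΩ : ∃ C > (0 : ℝ), ∀ T : ℕ, 1 ≤ T →
      distZ (fun j => (T : ℝ) * ω j) ≥
        C * (T : ℝ) ^ (-(1 + τ / (((n : ℝ) - 1) * τ + (n : ℝ))) / (n : ℝ))) :
    ¬ Resonant ω ∧ ¬ IsRationalVec ω ∧
      ∃ C' > (0 : ℝ), ∀ i : ℕ,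
        (periods ω (i + 1) : ℝ) ≤
          C' * (periods ω i : ℝ) ^ (1 + τ / (((n : ℝ) - 1) * τ + (n : ℝ))) := by
  have hn' : (1 : ℝ) ≤ n := by exact_mod_cast hn
  have hD : 0 < ((n : ℝ) - 1) * τ + n := by nlinarith
  have hσ : 0 ≤ τ / (((n : ℝ) - 1) * τ + n) := by positivity
  have hσ₁ : ((n : ℝ) - 1) * (τ / (((n : ℝ) - 1) * τ + n)) < 1 := by
    rw [← mul_div_assoc, div_lt_one hD]
    linarith
  have hres : ¬ Resonant ω := IsDiophantine.not_resonant hΩ (by linarith) hσ₁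
  exact ⟨hres, fun hrat => hres (hrat.resonant hn), IsDiophantine.exists_periods_succ_le hn hΩ⟩
end

section
/- (Khintchine transfer) Let n ≥ 1 and τ ≥ 0. Then Ω^n(τ) ⊆ Ω_n(nτ): if ω ∈ ℝⁿ satisfies ‖⟨k,ω⟩‖_ℤ ≥ C·|k|^{-(1+τ)n} for all nonzero k ∈ ℤⁿ (for some C > 0), then there exists C' > 0 such that ‖Tω‖_ℤ ≥ C'·T^{-(1+nτ)/n} for every positive integer T. -/
open Finset

/-! Let `ε = ‖Tω‖` and let `p` be the integer point nearest to `Tω`. For `M = ⌊T^{1/n}⌋` there are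
`(M+1)ⁿ > T` points in `{0,…,M}ⁿ`, so two of them have the same `⟨·, p⟩` modulo `T`; their
difference `k ≠ 0` has `|k| ≤ M` and `T ∣ ⟨k, p⟩`, whence `‖⟨k, ω⟩‖ ≤ n M ε / T`. The Diophantine
lower bound `‖⟨k, ω⟩‖ ≥ C |k|^{-(1+τ)n} ≥ C T^{-(1+τ)}` then forces `ε ≥ (C/n) T^{-(1+nτ)/n}`. -/

section SupNorm

variable {n : ℕ}

lemma supNorm_nonneg (x : Fin n → ℝ) : 0 ≤ supNorm x :=
  Real.iSup_nonneg fun _ => abs_nonneg _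

lemma abs_le_supNorm (x : Fin n → ℝ) (i : Fin n) : |x i| ≤ supNorm x :=
  le_ciSup (f := fun j => |x j|) (Set.finite_range _).bddAbove i

lemma supNorm_le [NeZero n] {x : Fin n → ℝ} {B : ℝ} (h : ∀ i, |x i| ≤ B) : supNorm x ≤ B :=
  ciSup_le h

lemma one_le_supNorm_intCast {k : Fin n → ℤ} (hk : k ≠ 0) : 1 ≤ supNorm fun i => (k i : ℝ) := by
  obtain ⟨i, hi⟩ := Function.ne_iff.1 hk
  calc (1 : ℝ) ≤ |(k i : ℝ)| := by exact_mod_cast Int.one_le_abs hi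
    _ ≤ _ := abs_le_supNorm (fun j => (k j : ℝ)) i

end SupNorm

section DistZ

variable {n : ℕ}

lemma distZ_nonneg (x : Fin n → ℝ) : 0 ≤ distZ x :=
  Real.sInf_nonneg <| by rintro r ⟨k, rfl⟩; exact supNorm_nonneg _

lemma abs_sub_round_le_distZ (x : Fin n → ℝ) (i : Fin n) : |x i - round (x i)| ≤ distZ x := by
  refine le_csInf ⟨_, 0, rfl⟩ ?_
  rintro r ⟨k, rfl⟩
  exact (round_le (x i) (k i)).trans (abs_le_supNorm (fun j => x j - k j) i)

lemma distZ1_le_abs_sub (t : ℝ) (m : ℤ) : distZ1 t ≤ |t - m| :=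
  csInf_le ⟨0, by rintro r ⟨k, rfl⟩; exact abs_nonneg _⟩ ⟨m, rfl⟩

end DistZ

lemma exists_ne_zero_abs_le_dvd_sum_mul {ι : Type*} [Fintype ι] [DecidableEq ι] (p : ι → ℤ)
    {T : ℕ} [NeZero T] (M : ℕ) (hT : T < (M + 1) ^ Fintype.card ι) :
    ∃ k : ι → ℤ, k ≠ 0 ∧ (∀ i, |k i| ≤ M) ∧ (T : ℤ) ∣ ∑ i, k i * p i := by
  have hcard : Fintype.card (ZMod T) < Fintype.card (ι → Fin (M + 1)) := by
    simpa [ZMod.card] using hT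
  obtain ⟨a, b, hab, hfab⟩ := Fintype.exists_ne_map_eq_of_card_lt
    (fun a : ι → Fin (M + 1) => ((∑ i, (a i : ℤ) * p i : ℤ) : ZMod T)) hcard
  refine ⟨fun i => (a i : ℤ) - b i, fun h => hab ?_, fun i => ?_, ?_⟩
  · funext i
    exact Fin.ext (by simpa [sub_eq_zero] using congrFun h i)
  · have ha := (a i).is_lt
    have hb := (b i).is_lt
    show |(a i : ℤ) - b i| ≤ M
    rw [abs_le]
    omega
  · rw [← ZMod.intCast_zmod_eq_zero_iff_dvd]
    push_cast at hfab ⊢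
    simp only [sub_mul, Finset.sum_sub_distrib, hfab, sub_self]

lemma distZ1_sum_mul_le {n : ℕ} {ω : Fin n → ℝ} {k p : Fin n → ℤ} {T : ℕ} (hT : 0 < T)
    {M ε : ℝ} (hk : ∀ i, |(k i : ℝ)| ≤ M) (hp : ∀ i, |T * ω i - p i| ≤ ε)
    (hdvd : (T : ℤ) ∣ ∑ i, k i * p i) :
    distZ1 (∑ i, (k i : ℝ) * ω i) ≤ n * M * ε / T := by
  obtain ⟨m, hm⟩ := hdvd
  have hT' : (0 : ℝ) < T := by exact_mod_cast hT
  have hm' : ∑ i, (k i : ℝ) * p i = T * m := by exact_mod_cast hm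
  have hsum : T * (∑ i, (k i : ℝ) * ω i - m) = ∑ i, (k i : ℝ) * (T * ω i - p i) := by
    simp only [mul_sub, Finset.mul_sum, Finset.sum_sub_distrib, ← hm']
    congr 1
    exact Finset.sum_congr rfl fun i _ => by ring
  rw [le_div_iff₀ hT']
  calc distZ1 (∑ i, (k i : ℝ) * ω i) * T ≤ |∑ i, (k i : ℝ) * ω i - m| * T := by
        gcongr
        exact distZ1_le_abs_sub _ m
    _ = |∑ i, (k i : ℝ) * (T * ω i - p i)| := by
        rw [← hsum, abs_mul, abs_of_pos hT', mul_comm]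
    _ ≤ ∑ i, |(k i : ℝ)| * |T * ω i - p i| := by
        simpa only [abs_mul] using
          Finset.abs_sum_le_sum_abs (fun i => (k i : ℝ) * (T * ω i - p i)) Finset.univ
    _ ≤ ∑ _i : Fin n, M * ε :=
        Finset.sum_le_sum fun i _ =>
          mul_le_mul (hk i) (hp i) (abs_nonneg _) ((abs_nonneg (k i : ℝ)).trans (hk i))
    _ = n * M * ε := by simp [mul_assoc]

lemma exists_ne_zero_supNorm_le_distZ1_le {n : ℕ} [NeZero n] (ω : Fin n → ℝ) {T : ℕ}
    (hT : 0 < T) :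
    ∃ k : Fin n → ℤ, k ≠ 0 ∧ supNorm (fun i => (k i : ℝ)) ≤ (T : ℝ) ^ (n⁻¹ : ℝ) ∧
      distZ1 (∑ i, (k i : ℝ) * ω i) ≤
        n * (T : ℝ) ^ (n⁻¹ : ℝ) * distZ (fun j => T * ω j) / T := by
  set A : ℝ := (T : ℝ) ^ (n⁻¹ : ℝ)
  set M := ⌊A⌋₊
  have hMA : (M : ℝ) ≤ A := Nat.floor_le (by positivity)
  have hcard : T < (M + 1) ^ Fintype.card (Fin n) := by
    have : (T : ℝ) < ((M : ℝ) + 1) ^ n :=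
      calc (T : ℝ) = A ^ n := (Real.rpow_inv_natCast_pow T.cast_nonneg (NeZero.ne n)).symm
        _ < _ := pow_lt_pow_left₀ (Nat.lt_floor_add_one A) (by positivity) (NeZero.ne n)
    rw [Fintype.card_fin]
    exact_mod_cast this
  have : NeZero T := ⟨hT.ne'⟩
  obtain ⟨k, hk0, hkM, hdvd⟩ :=
    exists_ne_zero_abs_le_dvd_sum_mul (fun i => round ((T : ℝ) * ω i)) M hcard
  have hkM' : ∀ i, |(k i : ℝ)| ≤ M := fun i => by exact_mod_cast hkM i
  refine ⟨k, hk0, (supNorm_le hkM').trans hMA, ?_⟩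
  calc _ ≤ n * M * distZ (fun j => T * ω j) / T :=
        distZ1_sum_mul_le hT hkM' (abs_sub_round_le_distZ fun j => (T : ℝ) * ω j) hdvd
    _ ≤ _ := by
        have := distZ_nonneg fun j => (T : ℝ) * ω j
        gcongr

lemma rpow_neg_le_rpow_neg_mul {x S σ : ℝ} {n : ℕ} (hx : 0 ≤ x) (hS : 0 < S)
    (hSx : S ≤ x ^ (n⁻¹ : ℝ)) (hσ : 0 ≤ σ) (hn : n ≠ 0) : x ^ (-σ) ≤ S ^ (-σ * n) :=
  calc x ^ (-σ) = (x ^ (n⁻¹ : ℝ)) ^ (-σ * n) := by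
        rw [← Real.rpow_mul hx]
        field_simp
    _ ≤ S ^ (-σ * n) :=
        Real.rpow_le_rpow_of_nonpos hS hSx
          (mul_nonpos_of_nonpos_of_nonneg (neg_nonpos.2 hσ) n.cast_nonneg)

/-- Khintchine: `Ω^n(τ) ⊆ Ω_n(nτ)`. -/
theorem stmt5 {n : ℕ} (hn : 1 ≤ n) (τ : ℝ) (hτ : 0 ≤ τ) (ω : Fin n → ℝ)
    (C : ℝ) (hC : 0 < C)
    (hlin : ∀ k : Fin n → ℤ, k ≠ 0 →
      distZ1 (∑ i, (k i : ℝ) * ω i) ≥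
        C * (supNorm fun i => (k i : ℝ)) ^ (-(1 + τ) * (n : ℝ))) :
    ∃ C' > (0 : ℝ), ∀ T : ℕ, 1 ≤ T →
      distZ (fun j => (T : ℝ) * ω j) ≥
        C' * (T : ℝ) ^ (-(1 + (n : ℝ) * τ) / (n : ℝ)) := by
  have : NeZero n := ⟨by omega⟩
  refine ⟨C / n, by positivity, fun T hT => ?_⟩
  have hT0 : (0 : ℝ) < T := by exact_mod_cast hT
  obtain ⟨k, hk0, hkA, hk⟩ := exists_ne_zero_supNorm_le_distZ1_le ω hT
  set A := (T : ℝ) ^ (n⁻¹ : ℝ)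
  set ε := distZ fun j => (T : ℝ) * ω j
  have hlower : C * (T : ℝ) ^ (-(1 + τ)) ≤ n * A * ε / T :=
    calc C * (T : ℝ) ^ (-(1 + τ)) ≤ C * (supNorm fun i => (k i : ℝ)) ^ (-(1 + τ) * (n : ℝ)) :=
          mul_le_mul_of_nonneg_left (rpow_neg_le_rpow_neg_mul hT0.le
            (one_pos.trans_le (one_le_supNorm_intCast hk0)) hkA (by linarith) (NeZero.ne n)) hC.le
      _ ≤ _ := hlin k hk0
      _ ≤ _ := hk
  have hexp : (T : ℝ) ^ (-(1 + (n : ℝ) * τ) / (n : ℝ)) = (T : ℝ) ^ (-(1 + τ)) * T / A := by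
    rw [← Real.rpow_add_one hT0.ne', ← Real.rpow_sub hT0]
    congr 1
    field_simp
    ring
  have hA : 0 < A := by positivity
  calc C / n * (T : ℝ) ^ (-(1 + (n : ℝ) * τ) / (n : ℝ))
        = C * (T : ℝ) ^ (-(1 + τ)) * T / (n * A) := by
        rw [hexp]
        field_simp
    _ ≤ ε := by
        rw [le_div_iff₀ hT0] at hlower
        rw [div_le_iff₀ (by positivity)]
        linarith
end

section
/- Let n ≥ 1 and let τ > 0 be a real number. For a positive integer T, let N(T) be the number of integer points w ∈ {0, 1, …, T−1}ⁿ for which there exists a nonzero k ∈ ℤⁿ with |k| ≤ T^{(1−τ)/(n+1)} and ⟨k,w⟩ ≡ 0 (mod T). Then N(T)/Tⁿ → 0 as T → ∞; in other words, the proportion of integer vectors w ∈ {0,…,T−1}ⁿ with e(w/T) ≤ T^{(1−τ)/(n+1)} tends to zero as T tends to infinity. -/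
/-!
Fix `k ≠ 0` with `|k| ≤ M` and a coordinate `i` with `k i ≠ 0`. Once the other coordinates of `w`
are fixed, `T ∣ ⟨k, w⟩` is a congruence `k i * w i ≡ c (mod T)`, which has at most `2 |k i| + 1`
solutions `w i ∈ [0, T)`; so at most `(2M + 1) T^(n-1)` vectors `w` are killed by `k`. Summing over
the at most `(2M + 1)^n` vectors `k` bounds the count by `(2M + 1)^(n+1) T^(n-1)`, and with
`M = T^((1-τ)/(n+1))` this is `O(T^(n-τ)) = o(T^n)`.
-/

open Finset

lemma card_filter_dvd_mul_add_le (T : ℕ) {a : ℤ} (ha : a ≠ 0) (b : ℤ) :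
    #{x : Fin T | (T : ℤ) ∣ a * x + b} ≤ 2 * a.natAbs + 1 := by
  set S := ({x : Fin T | (T : ℤ) ∣ a * x + b} : Finset (Fin T))
  rcases S.eq_empty_or_nonempty with hS | ⟨x₀, hx₀⟩
  · simp [hS]
  -- a solution `x` is determined by the quotient `(a x + b) / T`, which moves by at most `|a|`
  let q : Fin T → ℤ := fun x => (a * x + b) / T
  have hq : ∀ x ∈ S, (T : ℤ) * q x = a * x + b := fun x hx =>
    Int.mul_ediv_cancel' (mem_filter.mp hx).2
  have hT : (0 : ℤ) < T := by have := x₀.isLt; omega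
  have hmaps : Set.MapsTo q S (Icc (q x₀ - a.natAbs) (q x₀ + a.natAbs)) := by
    intro x hx
    have hdiff : (T : ℤ) * (q x - q x₀) = a * ((x : ℤ) - x₀) := by
      linear_combination hq x hx - hq x₀ hx₀
    have hx_close : |(x : ℤ) - x₀| ≤ T := by
      have := x.isLt; have := x₀.isLt; rw [abs_le]; omega
    have hscaled : T * |q x - q x₀| ≤ T * |a| := by
      calc (T : ℤ) * |q x - q x₀| = |a| * |(x : ℤ) - x₀| := by
            rw [← abs_of_pos hT, ← abs_mul, hdiff, abs_mul]
        _ ≤ |a| * T := mul_le_mul_of_nonneg_left hx_close (abs_nonneg a)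
        _ = T * |a| := mul_comm _ _
    have hq_close := le_of_mul_le_mul_left hscaled hT
    rw [abs_le, Int.abs_eq_natAbs] at hq_close
    simp only [coe_Icc, Set.mem_Icc]
    omega
  have hinj : Set.InjOn q S := by
    intro x hx y hy hxy
    have hax : a * (x : ℤ) = a * y := by linear_combination T * hxy - hq x hx + hq y hy
    exact Fin.ext (by exact_mod_cast mul_left_cancel₀ ha hax)
  calc #S ≤ #(Icc (q x₀ - a.natAbs) (q x₀ + a.natAbs)) := card_le_card_of_injOn q hmaps hinj
    _ = 2 * a.natAbs + 1 := by rw [Int.card_Icc]; omega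

lemma card_filter_dvd_inner_mul_le {n T : ℕ} {k : Fin n → ℤ} {i : Fin n} (hk : k i ≠ 0) :
    #{w : Fin n → Fin T | (T : ℤ) ∣ ∑ j, k j * (w j : ℤ)} * T
      ≤ (2 * (k i).natAbs + 1) * T ^ n := by
  classical
  let rest : (Fin n → Fin T) → ({j // j ≠ i} → Fin T) := fun w j => w j
  have hfiber : ∀ g ∈ (univ : Finset ({j // j ≠ i} → Fin T)),
      #{w ∈ ({w : Fin n → Fin T | (T : ℤ) ∣ ∑ j, k j * (w j : ℤ)} : Finset _) | rest w = g}
        ≤ 2 * (k i).natAbs + 1 := by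
    intro g _
    -- on the fiber over `g`, the condition only involves `w i`
    refine le_trans (card_le_card_of_injOn (fun w => w i) (t :=
      {x : Fin T | (T : ℤ) ∣ k i * x + ∑ j : {j // j ≠ i}, k j * (g j : ℤ)}) ?_ ?_)
      (card_filter_dvd_mul_add_le T hk _)
    · intro w hw
      simp only [coe_filter, mem_filter, mem_univ, true_and, Set.mem_ofPred_eq] at hw ⊢
      rw [← hw.2]
      simpa only [Fintype.sum_eq_add_sum_subtype_ne _ i] using hw.1
    · intro w hw w' hw' h
      simp only [coe_filter, mem_filter, mem_univ, true_and, Set.mem_ofPred_eq] at hw hw'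
      funext j
      by_cases hj : j = i
      · exact hj ▸ h
      · exact (congrFun hw.2 ⟨j, hj⟩).trans (congrFun hw'.2 ⟨j, hj⟩).symm
  have hrest : #(univ : Finset ({j // j ≠ i} → Fin T)) * T = T ^ n := by
    simp [Fintype.card_subtype_compl, pow_sub_one_mul (Fin.pos i).ne']
  calc _ ≤ (2 * (k i).natAbs + 1) * #(univ : Finset ({j // j ≠ i} → Fin T)) * T :=
        Nat.mul_le_mul_right T
          (card_le_mul_card_image_of_maps_to (fun _ _ => mem_univ _) _ hfiber)
    _ = (2 * (k i).natAbs + 1) * T ^ n := by rw [mul_assoc, hrest]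

open scoped Classical in
lemma card_filter_exists_dvd_inner_mul_le (n T M : ℕ) :
    #{w : Fin n → Fin T | ∃ k : Fin n → ℤ, k ≠ 0 ∧ (∀ i, (k i).natAbs ≤ M) ∧
        (T : ℤ) ∣ ∑ i, k i * (w i : ℤ)} * T ≤ (2 * M + 1) ^ (n + 1) * T ^ n := by
  let K := {k ∈ Fintype.piFinset fun _ : Fin n => Icc (-(M : ℤ)) M | k ≠ 0}
  let solutions (k : Fin n → ℤ) := ({w | (T : ℤ) ∣ ∑ i, k i * (w i : ℤ)} : Finset (Fin n → Fin T))
  have hsub : ({w : Fin n → Fin T | ∃ k : Fin n → ℤ, k ≠ 0 ∧ (∀ i, (k i).natAbs ≤ M) ∧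
      (T : ℤ) ∣ ∑ i, k i * (w i : ℤ)} : Finset (Fin n → Fin T)) ⊆ K.biUnion solutions := by
    intro w hw
    obtain ⟨k, hk0, hkM, hkw⟩ := (mem_filter.mp hw).2
    refine mem_biUnion.mpr ⟨k, mem_filter.mpr ⟨Fintype.mem_piFinset.mpr fun i => ?_, hk0⟩, ?_⟩
    · have := hkM i
      rw [mem_Icc]
      omega
    · exact mem_filter.mpr ⟨mem_univ _, hkw⟩
  have hsolutions : ∀ k ∈ K, #(solutions k) * T ≤ (2 * M + 1) * T ^ n := by
    intro k hk
    obtain ⟨hkM, hk0⟩ := mem_filter.mp hk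
    obtain ⟨i, hi⟩ := Function.ne_iff.mp hk0
    have : (k i).natAbs ≤ M := by
      have := Fintype.mem_piFinset.mp hkM i
      rw [mem_Icc] at this
      omega
    calc #(solutions k) * T ≤ (2 * (k i).natAbs + 1) * T ^ n := card_filter_dvd_inner_mul_le hi
      _ ≤ (2 * M + 1) * T ^ n := by gcongr
  have hK : #K ≤ (2 * M + 1) ^ n := by
    calc #K ≤ #(Fintype.piFinset fun _ : Fin n => Icc (-(M : ℤ)) M) := card_filter_le _ _
      _ = (2 * M + 1) ^ n := by
        rw [Fintype.card_piFinset_const, Int.card_Icc]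
        congr 1
        omega
  calc _ ≤ #(K.biUnion solutions) * T := Nat.mul_le_mul_right T (card_le_card hsub)
    _ ≤ (∑ k ∈ K, #(solutions k)) * T := Nat.mul_le_mul_right T card_biUnion_le
    _ = ∑ k ∈ K, #(solutions k) * T := sum_mul _ _ _
    _ ≤ #K * ((2 * M + 1) * T ^ n) := sum_le_card_nsmul _ _ _ hsolutions
    _ ≤ (2 * M + 1) ^ n * ((2 * M + 1) * T ^ n) := Nat.mul_le_mul_right _ hK
    _ = (2 * M + 1) ^ (n + 1) * T ^ n := by ring

lemma abs_le_of_supNorm_le {n : ℕ} {x : Fin n → ℝ} {r : ℝ} (h : supNorm x ≤ r) (i : Fin n) :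
    |x i| ≤ r :=
  (le_ciSup (Set.finite_range _).bddAbove i).trans h

lemma natCard_exists_dvd_inner_mul_le {n T : ℕ} {r : ℝ} (hr : 0 ≤ r) :
    (Nat.card {w : Fin n → Fin T // ∃ k : Fin n → ℤ, k ≠ 0 ∧
        (supNorm fun i => (k i : ℝ)) ≤ r ∧ (T : ℤ) ∣ ∑ i, k i * (w i : ℤ)} : ℝ) * T
      ≤ (2 * r + 1) ^ (n + 1) * T ^ n := by
  classical
  set M := ⌊r⌋₊
  have hbounded : ∀ k : Fin n → ℤ, (supNorm fun i => (k i : ℝ)) ≤ r → ∀ i, (k i).natAbs ≤ M :=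
    fun k hk i => Nat.le_floor <| by
      rw [Nat.cast_natAbs, Int.cast_abs]
      exact abs_le_of_supNorm_le hk i
  have hsub : ({w | ∃ k : Fin n → ℤ, k ≠ 0 ∧ (supNorm fun i => (k i : ℝ)) ≤ r ∧
        (T : ℤ) ∣ ∑ i, k i * (w i : ℤ)} : Finset (Fin n → Fin T)) ⊆
      ({w | ∃ k : Fin n → ℤ, k ≠ 0 ∧ (∀ i, (k i).natAbs ≤ M) ∧
        (T : ℤ) ∣ ∑ i, k i * (w i : ℤ)} : Finset (Fin n → Fin T)) :=
    monotone_filter_right _ fun _ _ ⟨k, hk0, hkr, hkw⟩ => ⟨k, hk0, hbounded k hkr, hkw⟩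
  have hcount := (Nat.mul_le_mul_right T (card_le_card hsub)).trans
    (card_filter_exists_dvd_inner_mul_le n T M)
  rw [Nat.card_eq_fintype_card, Fintype.card_subtype]
  calc _ ≤ (((2 * M + 1) ^ (n + 1) * T ^ n : ℕ) : ℝ) := by exact_mod_cast hcount
    _ ≤ (2 * r + 1) ^ (n + 1) * T ^ n := by
      push_cast
      gcongr
      exact Nat.floor_le hr

lemma two_mul_rpow_add_one_le {x : ℝ} (hx : 1 ≤ x) (e : ℝ) : 2 * x ^ e + 1 ≤ 3 * x ^ max e 0 := by
  have hle : x ^ e ≤ x ^ max e 0 := Real.rpow_le_rpow_of_exponent_le hx (le_max_left e 0)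
  have hone : 1 ≤ x ^ max e 0 := Real.one_le_rpow hx (le_max_right e 0)
  linarith

lemma natCard_exists_dvd_inner_div_le {n T : ℕ} (hT : 1 ≤ T) (e : ℝ) :
    (Nat.card {w : Fin n → Fin T // ∃ k : Fin n → ℤ, k ≠ 0 ∧
        (supNorm fun i => (k i : ℝ)) ≤ (T : ℝ) ^ e ∧ (T : ℤ) ∣ ∑ i, k i * (w i : ℤ)} : ℝ) / T ^ n
      ≤ 3 ^ (n + 1) * (T : ℝ) ^ (-(1 - (n + 1) * max e 0)) := by
  have hT1 : (1 : ℝ) ≤ T := by exact_mod_cast hT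
  have hTpos : (0 : ℝ) < T := by positivity
  have hpow : (T : ℝ) ^ ((n + 1) * max e 0) = ((T : ℝ) ^ max e 0) ^ (n + 1) := by
    rw [← Real.rpow_mul_natCast hTpos.le, mul_comm]
    push_cast
    rfl
  rw [div_le_iff₀ (by positivity)]
  calc _ ≤ (2 * (T : ℝ) ^ e + 1) ^ (n + 1) * T ^ n / T := by
        rw [le_div_iff₀ hTpos]
        exact natCard_exists_dvd_inner_mul_le (by positivity)
    _ ≤ (3 * (T : ℝ) ^ max e 0) ^ (n + 1) * T ^ n / T := by
        gcongr
        exact two_mul_rpow_add_one_le hT1 e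
    _ = 3 ^ (n + 1) * (T : ℝ) ^ (-(1 - (n + 1) * max e 0)) * T ^ n := by
        rw [neg_sub, Real.rpow_sub_one hTpos.ne', hpow]
        ring

theorem stmt12_general {n : ℕ} (τ : ℝ) (hτ : 0 < τ) :
    Filter.Tendsto (fun T : ℕ =>
      (Nat.card {w : Fin n → Fin T // ∃ k : Fin n → ℤ, k ≠ 0 ∧
          (supNorm fun i => (k i : ℝ)) ≤ (T : ℝ) ^ ((1 - τ) / ((n : ℝ) + 1)) ∧
          (T : ℤ) ∣ ∑ i, k i * (w i : ℤ)} : ℝ) / (T : ℝ) ^ n)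
      Filter.atTop (nhds 0) := by
  set e := (1 - τ) / ((n : ℝ) + 1)
  have hexp : 0 < 1 - (n + 1) * max e 0 := by
    rcases le_total e 0 with he | he
    · simp [max_eq_right he]
    · rw [max_eq_left he, mul_div_cancel₀ _ (by positivity)]
      linarith
  refine squeeze_zero' (.of_forall fun T => by positivity)
    ((Filter.eventually_ge_atTop 1).mono fun T hT => natCard_exists_dvd_inner_div_le hT e) ?_
  simpa using ((tendsto_rpow_neg_atTop hexp).comp tendsto_natCast_atTop_atTop).const_mul
    ((3 : ℝ) ^ (n + 1))

/-- the proportion of `w ∈ {0,…,T-1}ⁿ` with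
`e(w/T) ≤ T^{(1-τ)/(n+1)}` tends to `0` as `T → ∞`. -/
theorem stmt12 {n : ℕ} (hn : 1 ≤ n) (τ : ℝ) (hτ : 0 < τ) :
    Filter.Tendsto (fun T : ℕ =>
      (Nat.card {w : Fin n → Fin T // ∃ k : Fin n → ℤ, k ≠ 0 ∧
          (supNorm fun i => (k i : ℝ)) ≤ (T : ℝ) ^ ((1 - τ) / ((n : ℝ) + 1)) ∧
          (T : ℤ) ∣ ∑ i, k i * (w i : ℤ)} : ℝ) / (T : ℝ) ^ n)
      Filter.atTop (nhds 0) :=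
  stmt12_general τ hτ
end

section
/- Let n ≥ 2 and let ω ∈ ℝⁿ be resonant, i.e. there exists a nonzero k ∈ ℤⁿ with ⟨k,ω⟩ ∈ ℤ. Then there exists a constant C > 0 such that the inequality ‖Tω‖_ℤ ≤ C·T^{-1/(n−1)} holds for infinitely many positive integers T. -/
open Finset

/-!
If `ω` is rational, `Tω ∈ ℤⁿ` for every multiple `T` of a common denominator. Otherwise take
`k ≠ 0` with `⟨k, ω⟩ = m ∈ ℤ` and `k_i ≠ 0`. Dirichlet's theorem approximates the `n - 1`
coordinates `ω_j`, `j ≠ i`, simultaneously: some `1 ≤ q ≤ Q^{n-1}` has `‖q ω_j‖ < 1/Q`. Since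
`k_i ω_i ≡ -∑_{j ≠ i} k_j ω_j` modulo `ℤ`, the time `T = |k_i| q ≤ |k_i| Q^{n-1}` satisfies
`‖Tω‖_ℤ ≤ (∑ |k_j|)/Q ≪ T^{-1/(n-1)}`, and an irrational coordinate of `ω` forces `T → ∞`
as `Q → ∞`.
-/

lemma abs_fract_sub_fract_lt_of_floor_eq {Q : ℕ} (hQ : 0 < Q) {a b : ℝ}
    (h : ⌊(Q : ℝ) * Int.fract a⌋ = ⌊(Q : ℝ) * Int.fract b⌋) :
    |Int.fract b - Int.fract a| < 1 / Q := by
  have hQ' : (0 : ℝ) < Q := by exact_mod_cast hQ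
  have := Int.abs_sub_lt_one_of_floor_eq_floor h.symm
  rwa [← mul_sub, abs_mul, abs_of_pos hQ', ← lt_div_iff₀' hQ'] at this

/-- Dirichlet's simultaneous approximation theorem. -/
theorem exists_nat_abs_mul_sub_round_lt {ι : Type*} [Fintype ι] (α : ι → ℝ) {Q : ℕ}
    (hQ : 0 < Q) :
    ∃ q : ℕ, 0 < q ∧ q ≤ Q ^ Fintype.card ι ∧ ∀ j, |q * α j - round (q * α j)| < 1 / Q := by
  classical
  let box : ℕ → ι → ℤ := fun t j => ⌊(Q : ℝ) * Int.fract (t * α j)⌋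
  have hbox : Set.MapsTo box (range (Q ^ Fintype.card ι + 1))
      (Fintype.piFinset fun _ : ι => Ico (0 : ℤ) Q : Finset (ι → ℤ)) := by
    intro t _
    simp only [Fintype.coe_piFinset, Set.mem_pi, Set.mem_univ, coe_Ico,
      Set.mem_Ico, forall_const, box]
    intro j
    constructor
    · positivity
    · rw [Int.floor_lt, Int.cast_natCast]
      exact mul_lt_of_lt_one_right (by exact_mod_cast hQ) (Int.fract_lt_one _)
  obtain ⟨a, ha, b, hb, hab, heq⟩ := exists_ne_map_eq_of_card_lt_of_maps_to (by simp) hbox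
  wlog hlt : a < b generalizing a b
  · exact this b hb a ha hab.symm heq.symm (by omega)
  rw [mem_range] at hb
  refine ⟨b - a, by omega, by omega, fun j => ?_⟩
  calc |((b - a : ℕ) : ℝ) * α j - round (((b - a : ℕ) : ℝ) * α j)|
      ≤ |((b - a : ℕ) : ℝ) * α j - ((⌊b * α j⌋ - ⌊a * α j⌋ : ℤ) : ℝ)| := round_le _ _
    _ = |Int.fract (b * α j) - Int.fract (a * α j)| := by
      rw [Nat.cast_sub hlt.le, Int.fract, Int.fract]; push_cast; ring_nf
    _ < 1 / Q := abs_fract_sub_fract_lt_of_floor_eq hQ (congrFun heq j)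

lemma distZ_le_of_forall_abs_sub_le {n : ℕ} {x : Fin n → ℝ} (P : Fin n → ℤ) {c : ℝ}
    (hc : 0 ≤ c) (h : ∀ j, |x j - P j| ≤ c) : distZ x ≤ c := by
  refine (csInf_le ?_ (Set.mem_ofPred.mpr ⟨P, rfl⟩)).trans (Real.iSup_le h hc)
  exact ⟨0, by rintro r ⟨k, rfl⟩; exact Real.iSup_nonneg fun _ => abs_nonneg _⟩

lemma IsRationalVec.exists_nat_mul_eq_int {n : ℕ} {ω : Fin n → ℝ} (h : IsRationalVec ω) :
    ∃ D : ℕ, 0 < D ∧ ∀ j, ∃ p : ℤ, D * ω j = p := by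
  choose r hr using h
  refine ⟨∏ j, (r j).den, prod_pos fun j _ => (r j).den_pos, fun j => ?_⟩
  obtain ⟨c, hc⟩ := dvd_prod_of_mem (fun j => (r j).den) (mem_univ j)
  refine ⟨c * (r j).num, ?_⟩
  have hnum : ((r j).num : ℝ) = r j * (r j).den := by exact_mod_cast (Rat.mul_den_eq_num _).symm
  rw [hc, ← hr j, Int.cast_mul, hnum]
  push_cast
  ring

lemma IsRationalVec.exists_nat_ge_distZ_nonpos {n : ℕ} {ω : Fin n → ℝ} (h : IsRationalVec ω)
    (N : ℕ) : ∃ T : ℕ, N ≤ T ∧ 1 ≤ T ∧ distZ (fun j => (T : ℝ) * ω j) ≤ 0 := by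
  obtain ⟨D, hD, hDω⟩ := h.exists_nat_mul_eq_int
  choose p hp using hDω
  refine ⟨D * (N + 1), by nlinarith, by nlinarith, distZ_le_of_forall_abs_sub_le
    (fun j => (N + 1) * p j) le_rfl fun j => ?_⟩
  rw [Nat.cast_mul, mul_right_comm, hp j]
  push_cast
  simp [mul_comm]

lemma Irrational.exists_pos_le_abs_nat_mul_sub_round {x : ℝ} (hx : Irrational x) (N : ℕ) :
    ∃ ε > 0, ∀ T : ℕ, 0 < T → T ≤ N → ε ≤ |T * x - round (T * x)| := by
  induction N with
  | zero => exact ⟨1, one_pos, fun T hT hTN => by omega⟩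
  | succ N ih =>
    obtain ⟨ε, hε, hεN⟩ := ih
    have hN : 0 < |((N + 1 : ℕ) : ℝ) * x - round (((N + 1 : ℕ) : ℝ) * x)| :=
      abs_pos.mpr (sub_ne_zero.mpr ((hx.natCast_mul N.succ_ne_zero).ne_int _))
    refine ⟨_, lt_min hε hN, fun T hT hTN => ?_⟩
    rcases hTN.lt_or_eq with hlt | rfl
    · exact (min_le_left _ _).trans (hεN T hT (by omega))
    · exact min_le_right _ _

lemma one_div_le_mul_rpow_neg_inv {T K Q : ℝ} {d : ℕ} (hd : d ≠ 0) (hT : 0 < T) (hK : 1 ≤ K)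
    (hQ : 0 < Q) (h : T ≤ K * Q ^ d) : 1 / Q ≤ K * T ^ (-(d : ℝ)⁻¹) := by
  have hroot : T ^ (d : ℝ)⁻¹ ≤ K * Q :=
    calc T ^ (d : ℝ)⁻¹ ≤ (K * Q ^ d) ^ (d : ℝ)⁻¹ := by gcongr
      _ = K ^ (d : ℝ)⁻¹ * Q := by
        rw [Real.mul_rpow (by positivity) (by positivity), Real.pow_rpow_inv_natCast hQ.le hd]
      _ ≤ K * Q := by
        gcongr
        simpa using Real.rpow_le_rpow_of_exponent_le hK (Nat.cast_inv_le_one d)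
  rw [Real.rpow_neg hT.le, ← div_eq_mul_inv, div_le_div_iff₀ hQ (by positivity)]
  linarith

lemma exists_abs_mul_sub_le_of_sum_mul_eq_int {n : ℕ} {ω : Fin n → ℝ} {k : Fin n → ℤ} {m : ℤ}
    (hm : ∑ j, (k j : ℝ) * ω j = m) (i : Fin n) (q : ℕ) {δ : ℝ} (hδ : 0 ≤ δ)
    (hq : ∀ j ≠ i, |q * ω j - round (q * ω j)| ≤ δ) :
    ∃ P : Fin n → ℤ, ∀ j,
      |(((k i).natAbs * q : ℕ) : ℝ) * ω j - P j| ≤ (∑ j, |(k j : ℝ)|) * δ := by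
  have hk_le : |(k i : ℝ)| ≤ ∑ j, |(k j : ℝ)| :=
    single_le_sum (f := fun j => |(k j : ℝ)|) (fun _ _ => abs_nonneg _) (mem_univ i)
  refine ⟨fun j => if j = i then (k i).sign * (q * m - ∑ l ∈ univ.erase i, k l * round (q * ω l))
    else (k i).natAbs * round (q * ω j), fun j => ?_⟩
  simp only [Nat.cast_mul, Nat.cast_natAbs, Int.cast_abs]
  by_cases hj : j = i
  · subst hj
    have hsplit := (add_sum_erase univ (fun l => (k l : ℝ) * ω l) (mem_univ j)).trans hm
    have hsign : |(k j : ℝ)| = (k j).sign * k j := by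
      rw [← Int.cast_abs, ← Int.cast_mul, Int.sign_mul_self, Int.natCast_natAbs]
    have hsign_le : |((k j).sign : ℝ)| ≤ 1 := by
      rcases Int.sign_trichotomy (k j) with h | h | h <;> simp [h]
    -- `⟨k, ω⟩ ∈ ℤ` turns the error at `j` into a combination of the errors at the other indices.
    have herr : |(k j : ℝ)| * q * ω j
        - (k j).sign * (q * m - ∑ l ∈ univ.erase j, (k l : ℝ) * round (q * ω l))
        = -((k j).sign * ∑ l ∈ univ.erase j, k l * (q * ω l - round (q * ω l))) := by
      simp only [mul_sub, sum_sub_distrib, hsign, mul_left_comm _ (q : ℝ), ← mul_sum]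
      linear_combination ((k j).sign * q : ℝ) * hsplit
    simp only [if_pos]
    push_cast
    rw [herr, abs_neg, abs_mul]
    calc |((k j).sign : ℝ)| * |∑ l ∈ univ.erase j, (k l : ℝ) * (q * ω l - round (q * ω l))|
        ≤ 1 * ∑ l ∈ univ.erase j, |(k l : ℝ)| * δ := by
          gcongr
          refine (abs_sum_le_sum_abs _ _).trans (sum_le_sum fun l hl => ?_)
          rw [abs_mul]
          exact mul_le_mul_of_nonneg_left (hq l (ne_of_mem_erase hl)) (abs_nonneg _)
      _ ≤ (∑ l, |(k l : ℝ)|) * δ := by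
          rw [one_mul, sum_mul]
          exact sum_le_sum_of_subset_of_nonneg (erase_subset _ _) fun _ _ _ => by positivity
  · simp only [if_neg hj]
    push_cast
    rw [mul_assoc, ← mul_sub, abs_mul, abs_abs]
    exact mul_le_mul hk_le (hq j hj) (abs_nonneg _) (hk_le.trans' (abs_nonneg _))

theorem exists_const_distZ_le_rpow_of_irrational {n : ℕ} (hn : 2 ≤ n) {ω : Fin n → ℝ}
    {j₀ : Fin n} (hj₀ : Irrational (ω j₀)) {k : Fin n → ℤ} {i : Fin n} (hi : k i ≠ 0) {m : ℤ}
    (hm : ∑ j, (k j : ℝ) * ω j = m) :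
    ∃ C > (0 : ℝ), ∀ N : ℕ, ∃ T : ℕ, N ≤ T ∧ 1 ≤ T ∧
      distZ (fun j => (T : ℝ) * ω j) ≤ C * (T : ℝ) ^ (-((n - 1 : ℕ) : ℝ)⁻¹) := by
  set S := ∑ j, |(k j : ℝ)|
  have hS : 0 < S := (abs_pos.mpr (Int.cast_ne_zero.mpr hi)).trans_le
    (single_le_sum (f := fun j => |(k j : ℝ)|) (fun _ _ => abs_nonneg _) (mem_univ i))
  have hK : 0 < (k i).natAbs := Int.natAbs_pos.mpr hi
  refine ⟨S * (k i).natAbs, by positivity, fun N => ?_⟩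
  obtain ⟨ε, hε, hεN⟩ := hj₀.exists_pos_le_abs_nat_mul_sub_round N
  obtain ⟨Q, hQ⟩ := exists_nat_gt (S / ε)
  have hQ0 : (0 : ℝ) < Q := (div_pos hS hε).trans hQ
  obtain ⟨q, hq, hqQ, hqω⟩ :=
    exists_nat_abs_mul_sub_round_lt (fun j : {j // j ≠ i} => ω j) (Nat.cast_pos.mp hQ0)
  obtain ⟨P, hP⟩ := exists_abs_mul_sub_le_of_sum_mul_eq_int hm i q (δ := 1 / Q) (by positivity)
    fun j hj => (hqω ⟨j, hj⟩).le
  set T := (k i).natAbs * q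
  have hSQ : S * (1 / Q) < ε := by
    rw [mul_one_div, div_lt_iff₀ hQ0]; rwa [div_lt_iff₀ hε, mul_comm] at hQ
  -- Approximations this good cannot come from `T ≤ N`, since `T ω_{j₀}` stays away from `ℤ` there.
  have hNT : N < T := by
    by_contra! hTN
    exact (hεN T (Nat.mul_pos hK hq) hTN |>.trans ((round_le _ _).trans (hP j₀))).not_gt hSQ
  refine ⟨T, hNT.le, Nat.mul_pos hK hq,
    (distZ_le_of_forall_abs_sub_le P (by positivity) hP).trans ?_⟩
  rw [mul_assoc]
  gcongr
  refine one_div_le_mul_rpow_neg_inv (by omega) (by positivity) (by exact_mod_cast hK) hQ0 ?_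
  simp only [T, Nat.cast_mul, Nat.cast_natAbs, Int.cast_abs]
  gcongr
  exact_mod_cast (by simpa using hqQ : q ≤ Q ^ (n - 1))

/-- a resonant vector in `ℝⁿ`, `n ≥ 2`, satisfies
`‖Tω‖_ℤ ≤ C·T^{-1/(n-1)}` for infinitely many positive integers `T`. -/
theorem stmt13 {n : ℕ} (hn : 2 ≤ n) (ω : Fin n → ℝ) (hres : Resonant ω) :
    ∃ C > (0 : ℝ), ∀ N : ℕ, ∃ T : ℕ, N ≤ T ∧ 1 ≤ T ∧
      distZ (fun j => (T : ℝ) * ω j) ≤ C * (T : ℝ) ^ (-(1 : ℝ) / ((n : ℝ) - 1)) := by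
  by_cases hrat : IsRationalVec ω
  · refine ⟨1, one_pos, fun N => ?_⟩
    obtain ⟨T, hNT, hT, hdist⟩ := hrat.exists_nat_ge_distZ_nonpos N
    exact ⟨T, hNT, hT, hdist.trans (by positivity)⟩
  obtain ⟨j₀, hj₀⟩ : ∃ j, Irrational (ω j) := by simpa [IsRationalVec, Irrational] using hrat
  obtain ⟨k, hk, m, hm⟩ := hres
  obtain ⟨i, hi⟩ := Function.ne_iff.mp hk
  have hexp : -(1 : ℝ) / ((n : ℝ) - 1) = -((n - 1 : ℕ) : ℝ)⁻¹ := by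
    rw [Nat.cast_pred (by omega)]; ring
  simpa only [hexp] using exists_const_distZ_le_rpow_of_irrational hn hj₀ hi hm
end
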